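/- arXiv:2605.17177 — 2 statements merged into one kernel-verified Lean document; each statement's English description precedes it below -/
import Mathlib

section
/- For every ρ ≥ 1 and every real z, the inequality ρ·cosh z + sinh z ≤ 2(ρ(cosh z − 1) + sinh z − z) + 2ρ·log 2 holds. -/
open Real

/-- For every `ρ ≥ 1` and every real `z`,
`ρ·cosh z + sinh z ≤ 2(ρ(cosh z − 1) + sinh z − z) + 2ρ·log 2`. -/
theorem cosh_sinh_le_two_entropy_add (ρ z : ℝ) (hρ : 1 ≤ ρ) :
    ρ * Real.cosh z + Real.sinh z ≤
      2 * (ρ * (Real.cosh z - 1) + Real.sinh z - z) + 2 * ρ * Real.log 2 := by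
  have hcosh : 1 ≤ Real.cosh z := Real.one_le_cosh z
  have hlog2 : (0.6931471803 : ℝ) < Real.log 2 := Real.log_two_gt_d9
  have hexp : 2 * (1 + (z - Real.log 2)) ≤ Real.exp z := by
    have h1 : (z - Real.log 2) + 1 ≤ Real.exp (z - Real.log 2) := Real.add_one_le_exp _
    have h2 : Real.exp (z - Real.log 2) = Real.exp z / 2 := by
      rw [Real.exp_sub, Real.exp_log (by norm_num)]
    nlinarith [h1, h2]
  have hsum : Real.cosh z + Real.sinh z = Real.exp z := Real.cosh_add_sinh z
  nlinarith [hexp, hsum, hcosh, hlog2, mul_le_mul_of_nonneg_right hρ (le_trans (by norm_num) hlog2.le)]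
end

section
/- Fix L* > 0 and define K_{L*} := {(ρ, z) ∈ [1, √5] × ℝ : Φ_ρ(z) ≤ L*} where Φ_ρ(z) = ρ(cosh z − 1) + sinh z − z. Then K_{L*} is a compact subset of ℝ², and there exist constants 0 < m ≤ M < ∞ depending only on L* such that m·Φ_ρ(z) ≤ (ρ sinh z + cosh z − 1)² ≤ M·Φ_ρ(z) for all (ρ, z) ∈ K_{L*}. -/
open Real

-- quadratic lower bound for exp
lemma aux_quad (z : ℝ) (hz : -2 ≤ z) : z^2/4 ≤ Real.exp z - 1 - z := by
  have h := Real.add_one_le_exp (z/2)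
  have he : Real.exp z = Real.exp (z/2) * Real.exp (z/2) := by
    rw [← Real.exp_add]; ring_nf
  nlinarith [Real.exp_pos (z/2)]

lemma aux_phi_lb (ρ z : ℝ) (hρ : 1 ≤ ρ) :
    Real.exp z - 1 - z ≤ ρ * (Real.cosh z - 1) + Real.sinh z - z := by
  have h1 := Real.one_le_cosh z
  have h2 := Real.cosh_add_sinh z
  nlinarith

lemma aux_zN (ρ z : ℝ) (hρ : 1 ≤ ρ) :
    ρ * (Real.cosh z - 1) + Real.sinh z - z ≤
      z * (ρ * Real.sinh z + Real.cosh z - 1) := by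
  rw [Real.cosh_eq, Real.sinh_eq]
  have hut : Real.exp (-z) * Real.exp z = 1 := by
    rw [← Real.exp_add]; simp
  have ha : (1 - z) * Real.exp z ≤ 1 := by
    nlinarith [Real.add_one_le_exp (-z), Real.exp_pos z]
  have hb : (1 + z) * Real.exp (-z) ≤ 1 := by
    nlinarith [Real.add_one_le_exp z, Real.exp_pos (-z)]
  nlinarith [mul_nonneg (sub_nonneg.2 hρ)
    (show (0:ℝ) ≤ 2 - ((1-z)*Real.exp z + (1+z)*Real.exp (-z)) by linarith)]

lemma aux_zbound (Lstar z : ℝ) (hL : 0 < Lstar)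
    (hE : Real.exp z - 1 - z ≤ Lstar) :
    -(2 + 2*Lstar + 2*Real.sqrt Lstar) ≤ z ∧ z ≤ 2 + 2*Lstar + 2*Real.sqrt Lstar := by
  have hs := Real.sq_sqrt hL.le
  have hsp := Real.sqrt_pos.2 hL
  rcases le_or_gt (-2) z with hz2 | hz2
  · have hq := aux_quad z hz2
    constructor <;> nlinarith
  · have := Real.exp_pos z
    constructor <;> nlinarith



set_option maxHeartbeats 1000000

lemma aux_philow (R z : ℝ) (hR : 2 ≤ R) (hz1 : -R ≤ z) :
    z^2 ≤ 2*R*(Real.exp z - 1 - z) := by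
  rcases le_or_gt (-2) z with hz2 | hz2
  · have h := Real.add_one_le_exp (z/2)
    have he : Real.exp z = Real.exp (z/2) * Real.exp (z/2) := by
      rw [← Real.exp_add]; ring_nf
    have hq : z^2/4 ≤ Real.exp z - 1 - z := by nlinarith [Real.exp_pos (z/2)]
    have h0 : 0 ≤ Real.exp z - 1 - z := by nlinarith [sq_nonneg z]
    nlinarith [mul_le_mul_of_nonneg_left hq (show (0:ℝ) ≤ 2*R by linarith),
      sq_nonneg z]
  · have he := Real.exp_pos z
    nlinarith [mul_nonneg (show (0:ℝ) ≤ R + z by linarith) (show (0:ℝ) ≤ -z by linarith),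
      mul_nonneg (show (0:ℝ) ≤ R by linarith) (show (0:ℝ) ≤ -z - 2 by linarith),
      mul_pos (show (0:ℝ) < 2*R by linarith) he]

lemma aux_Nbound (R ρ z : ℝ) (hR : 0 < R) (hρ1 : 1 ≤ ρ) (hρ5 : ρ ≤ Real.sqrt 5)
    (hz1 : -R ≤ z) (hz2 : z ≤ R) :
    (ρ * Real.sinh z + Real.cosh z - 1)^2 ≤
      ((Real.sqrt 5 * (Real.exp R + 1) + Real.exp R)/2)^2 * z^2 := by
  rw [Real.cosh_eq, Real.sinh_eq]
  set t := Real.exp z with ht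
  set u := Real.exp (-z) with hu
  set eR := Real.exp R with heR
  have hut : u * t = 1 := by rw [ht, hu, ← Real.exp_add]; simp
  have ht0 : 0 < t := Real.exp_pos z
  have hu0 : 0 < u := Real.exp_pos (-z)
  have heR1 : 1 ≤ eR := Real.one_le_exp hR.le
  have h5 : 1 ≤ Real.sqrt 5 := by
    nlinarith [Real.sq_sqrt (by norm_num : (0:ℝ) ≤ 5), Real.sqrt_nonneg 5]
  have hta : (1 - z) * t ≤ 1 := by
    nlinarith [Real.add_one_le_exp (-z)]
  have hub : (1 + z) * u ≤ 1 := by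
    nlinarith [Real.add_one_le_exp z]
  have ht1' : 1 + z ≤ t := by have := Real.add_one_le_exp z; linarith
  have hu1' : 1 - z ≤ u := by have := Real.add_one_le_exp (-z); linarith
  set E := (Real.sqrt 5 * (eR + 1) + eR)/2 with hE
  set N := ρ * ((t - u)/2) + (t + u)/2 - 1 with hN
  show N^2 ≤ E^2 * z^2
  rcases le_or_gt 0 z with hz0 | hz0
  · -- z ≥ 0 : 0 ≤ N ≤ E z
    have htR : t ≤ eR := Real.exp_le_exp.mpr hz2
    have hu1 : u ≤ 1 := Real.exp_le_one_iff.mpr (by linarith)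
    have ht1 : 1 ≤ t := Real.one_le_exp hz0
    have hN0 : 0 ≤ N := by rw [hN]; nlinarith
    have h1 : t - 1 ≤ z * eR := by nlinarith
    have h2 : 1 - u ≤ z := by linarith
    have h3 : ρ * (t - u) ≤ Real.sqrt 5 * (z * eR + z) :=
      le_trans (mul_le_mul_of_nonneg_right hρ5 (by nlinarith : (0:ℝ) ≤ t - u))
        (mul_le_mul_of_nonneg_left (by linarith) (Real.sqrt_nonneg 5))
    have hEz : E * z = (Real.sqrt 5 * (z * eR + z) + z * eR)/2 := by rw [hE]; ring
    have hNE : N ≤ E * z := by rw [hN, hEz]; linarith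
    calc N^2 ≤ (E*z)^2 := pow_le_pow_left₀ hN0 hNE 2
      _ = E^2 * z^2 := by ring
  · -- z < 0 : E z ≤ N ≤ 0
    have huR : u ≤ eR := Real.exp_le_exp.mpr (by linarith)
    have ht1 : t ≤ 1 := Real.exp_le_one_iff.mpr hz0.le
    have hu1 : 1 ≤ u := Real.one_le_exp (by linarith)
    have hN0 : N ≤ 0 := by rw [hN]; nlinarith [mul_nonneg (sub_nonneg.2 hρ1) (show (0:ℝ) ≤ u - t by linarith)]
    have h1 : u - 1 ≤ (-z) * eR := by nlinarith [mul_le_mul_of_nonneg_left huR (show (0:ℝ) ≤ -z by linarith)]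
    have h2 : 1 - t ≤ -z := by linarith
    have h3 : ρ * (u - t) ≤ Real.sqrt 5 * ((-z) * eR + (-z)) :=
      le_trans (mul_le_mul_of_nonneg_right hρ5 (by linarith : (0:ℝ) ≤ u - t))
        (mul_le_mul_of_nonneg_left (by linarith) (Real.sqrt_nonneg 5))
    have hEz : E * z = -((Real.sqrt 5 * ((-z) * eR + (-z)) + (-z) * eR)/2) := by
      rw [hE]; ring
    have hc : 2 ≤ t + u := by nlinarith
    have hNE : E * z ≤ N := by
      rw [hN, hEz]
      linarith [mul_nonneg (show (0:ℝ) ≤ -z by linarith) (show (0:ℝ) ≤ eR by linarith)]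
    have : (-N)^2 ≤ (-(E*z))^2 := pow_le_pow_left₀ (by linarith) (by linarith) 2
    nlinarith [this]


/-- Coercivity under an entropy barrier: with `Φ_ρ(z) = ρ(cosh z − 1) + sinh z − z`, for any
`L* > 0` the set `K_{L*} = {(ρ, z) ∈ [1, √5] × ℝ : Φ_ρ(z) ≤ L*}` is compact and there exist
`0 < m ≤ M < ∞` such that `m Φ_ρ(z) ≤ (ρ sinh z + cosh z − 1)² ≤ M Φ_ρ(z)` on `K_{L*}`. -/
theorem coercivity_entropy_barrier (Lstar : ℝ) (hL : 0 < Lstar) :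
    let Φ : ℝ → ℝ → ℝ := fun ρ z => ρ * (Real.cosh z - 1) + Real.sinh z - z
    let K : Set (ℝ × ℝ) :=
      {p | p.1 ∈ Set.Icc 1 (Real.sqrt 5) ∧ Φ p.1 p.2 ≤ Lstar}
    IsCompact K ∧
    ∃ m M : ℝ, 0 < m ∧ m ≤ M ∧
      ∀ p ∈ K,
        m * Φ p.1 p.2 ≤ (p.1 * Real.sinh p.2 + Real.cosh p.2 - 1) ^ 2 ∧
        (p.1 * Real.sinh p.2 + Real.cosh p.2 - 1) ^ 2 ≤ M * Φ p.1 p.2 := by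
  intro Φ K
  set R : ℝ := 2 + 2*Lstar + 2*Real.sqrt Lstar with hRdef
  have hR2 : 2 ≤ R := by
    have := Real.sqrt_nonneg Lstar; rw [hRdef]; linarith
  have hR0 : 0 < R := by linarith
  -- every point of K has |z| ≤ R
  have hzbd : ∀ p : ℝ × ℝ, p ∈ K → -R ≤ p.2 ∧ p.2 ≤ R := by
    intro p hp
    obtain ⟨⟨hρ1, hρ5⟩, hΦL⟩ := hp
    have hE : Real.exp p.2 - 1 - p.2 ≤ Lstar :=
      le_trans (aux_phi_lb p.1 p.2 hρ1) hΦL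
    exact aux_zbound Lstar p.2 hL hE
  constructor
  · -- compactness
    have hclosed : IsClosed K := by
      have h1 : IsClosed (Prod.fst ⁻¹' Set.Icc (1:ℝ) (Real.sqrt 5)) :=
        isClosed_Icc.preimage (continuous_fst : Continuous (Prod.fst : ℝ × ℝ → ℝ))
      have hcont : Continuous (fun p : ℝ × ℝ =>
          p.1 * (Real.cosh p.2 - 1) + Real.sinh p.2 - p.2) := by fun_prop
      have h2 : IsClosed {p : ℝ × ℝ |
          p.1 * (Real.cosh p.2 - 1) + Real.sinh p.2 - p.2 ≤ Lstar} :=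
        isClosed_le hcont continuous_const
      exact h1.inter h2
    have hsub : K ⊆ Set.Icc 1 (Real.sqrt 5) ×ˢ Set.Icc (-R) R := by
      intro p hp
      exact ⟨hp.1, (hzbd p hp).1, (hzbd p hp).2⟩
    have hKc : IsCompact ((Set.Icc (1:ℝ) (Real.sqrt 5)) ×ˢ (Set.Icc (-R) R)) :=
      isCompact_Icc.prod isCompact_Icc
    exact hKc.of_isClosed_subset hclosed hsub
  · -- the two-sided bound
    set E : ℝ := (Real.sqrt 5 * (Real.exp R + 1) + Real.exp R)/2 with hEdef
    refine ⟨1/(2*R), max (1/(2*R)) (2*R*E^2), by positivity, le_max_left _ _, ?_⟩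
    rintro ⟨ρ, z⟩ hp
    obtain ⟨hz1', hz2'⟩ := hzbd _ hp
    obtain ⟨⟨hρ1, hρ5⟩, hΦL⟩ := hp
    dsimp only at hρ1 hρ5 hΦL hz1' hz2' ⊢
    have hz1 : -R ≤ z := hz1'
    have hz2 : z ≤ R := hz2'
    have hΦ0 : 0 ≤ Φ ρ z := by
      have h1 := Real.add_one_le_exp z
      have h2 := aux_phi_lb ρ z hρ1
      simp only [Φ]; linarith
    have hquad : z^2 ≤ 2*R*(Φ ρ z) := by
      have h1 := aux_philow R z hR2 hz1
      have h2 := aux_phi_lb ρ z hρ1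
      simp only [Φ]
      nlinarith
    have hzN : Φ ρ z ≤ z * (ρ * Real.sinh z + Real.cosh z - 1) := aux_zN ρ z hρ1
    have hNsq : (ρ * Real.sinh z + Real.cosh z - 1)^2 ≤ E^2 * z^2 := by
      rw [hEdef]; exact aux_Nbound R ρ z hR0 hρ1 hρ5 hz1 hz2
    constructor
    · -- lower bound
      rcases eq_or_ne z 0 with rfl | hz0
      · have hΦ0' : Φ ρ 0 ≤ 0 := by simpa using hzN
        have heq : Φ ρ 0 = 0 := le_antisymm hΦ0' hΦ0
        rw [heq, mul_zero]
        positivity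
      · have hzsq : 0 < z^2 := by positivity
        rw [one_div, inv_mul_le_iff₀ (show (0:ℝ) < 2*R by linarith)]
        have k3 : Φ ρ z ^ 2 ≤ (ρ * Real.sinh z + Real.cosh z - 1)^2 * z^2 := by
          nlinarith [hzN, hΦ0, sq_nonneg (z * (ρ * Real.sinh z + Real.cosh z - 1))]
        have c1 : Φ ρ z * z^2 ≤ Φ ρ z * (2*R*(Φ ρ z)) :=
          mul_le_mul_of_nonneg_left hquad hΦ0
        have c2 : Φ ρ z * (2*R*(Φ ρ z)) ≤ 2*R*((ρ * Real.sinh z + Real.cosh z - 1)^2 * z^2) := by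
          nlinarith [k3]
        have c3 : Φ ρ z * z^2 ≤ (2*R*(ρ * Real.sinh z + Real.cosh z - 1)^2) * z^2 := by
          nlinarith [c1, c2]
        exact le_of_mul_le_mul_right c3 hzsq
    · -- upper bound
      have k1 : E^2 * z^2 ≤ E^2 * (2*R*(Φ ρ z)) :=
        mul_le_mul_of_nonneg_left hquad (by positivity)
      have k2 : E^2 * (2*R*(Φ ρ z)) ≤ max (1/(2*R)) (2*R*E^2) * Φ ρ z := by
        have h := mul_le_mul_of_nonneg_right (le_max_right (1/(2*R)) (2*R*E^2)) hΦ0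
        nlinarith [h]
      exact le_trans hNsq (le_trans k1 k2)
end
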